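/- arXiv:2602.01366 — 2 statements merged into one kernel-verified Lean document; each statement's English description precedes it below -/
import Mathlib

section
/- Let 0 < α < 1, γ ≥ 0 with α + γ ≤ 1, and let λ > 0. Define f(t) = ∑_{n=0}^∞ c_n (-λ)^n t^{(α+γ)n} for t ≥ 0, where c_n are the Kilbas–Saigo coefficients with parameters (α, 1 + γ/α, γ/α), i.e. f(t) = E_{α, 1+γ/α, γ/α}(-λ t^{α+γ}). Then f(0) = 1, and for every t > 0 the stretched fractional relaxation equation holds: t^{-γ} · (1/Γ(1-α)) ∫_0^t f'(τ)(t-τ)^{-α} dτ = -λ f(t). -/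
/-!
Write `β = α + γ`, `cₙ` for the coefficients and `aₙ = cₙ (-λ)ⁿ`, so that
`f(t) = ∑ aₙ t^(βn)`. The log-convexity of `Γ` (Gautschi's inequality) shows that
`c_{n+1} / cₙ = Γ(1 + nβ + γ) / Γ(1 + (n+1)β)` tends to `0`, so the series and its termwise
derivative converge absolutely, locally uniformly on `(0, ∞)`, and the Caputo integral can be
taken term by term. Each term is a Beta integral,
`∫₀ᵗ p τ^(p-1) (t-τ)^(-α) dτ = Γ(1-α) Γ(p+1) / Γ(p+1-α) t^(p-α)`,
and the parameters are chosen so that `c_{n+1} Γ(β(n+1)+1) / Γ(β(n+1)+1-α) = cₙ` and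
`t^(-γ) t^(β(n+1)-α) = t^(βn)`: the stretched operator shifts the series down by one index,
which multiplies it by `-λ`.
-/

open MeasureTheory intervalIntegral Set Filter Topology Real

/-- Kilbas–Saigo coefficients: `c 0 = 1` and
`c n = ∏_{k=0}^{n-1} Γ(1 + a(km + l)) / Γ(1 + a(km + l + 1))`. -/
noncomputable def ksCoeff (a m l : ℝ) (n : ℕ) : ℝ :=
  ∏ k ∈ Finset.range n,
    Real.Gamma (1 + a * (k * m + l)) / Real.Gamma (1 + a * (k * m + l + 1))

namespace Real

theorem mul_Gamma_le_Gamma_add_mul_rpow {α y : ℝ} (hα0 : 0 < α) (hα1 : α < 1) (hy : 0 < y) :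
    y * Gamma y ≤ Gamma (y + α) * (y + α) ^ (1 - α) := by
  have hyα : 0 < y + α := by linarith
  have hΓ := (Gamma_pos_of_pos hyα).le
  -- log-convexity of `Γ` between `y + α` and `y + α + 1`, with weights `α` and `1 - α`
  have h := Gamma_mul_add_mul_le_rpow_Gamma_mul_rpow_Gamma hyα (by linarith : 0 < y + α + 1)
    hα0 (sub_pos.2 hα1) (add_sub_cancel α 1)
  rwa [show α * (y + α) + (1 - α) * (y + α + 1) = y + 1 by ring, Gamma_add_one hy.ne',
    Gamma_add_one hyα.ne', mul_rpow hyα.le hΓ, mul_left_comm, ← rpow_add' hΓ (by simp),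
    add_sub_cancel, rpow_one, mul_comm ((y + α) ^ _)] at h

theorem tendsto_Gamma_div_Gamma_add_atTop {α : ℝ} (hα0 : 0 < α) (hα1 : α < 1) :
    Tendsto (fun y => Gamma y / Gamma (y + α)) atTop (𝓝 0) := by
  have hlim : Tendsto (fun y => 2 * (y + α) ^ (-α)) atTop (𝓝 0) := by
    simpa using ((tendsto_rpow_neg_atTop hα0).comp
      (tendsto_atTop_add_const_right _ α tendsto_id)).const_mul 2
  refine squeeze_zero' ?_ ?_ hlim
  · filter_upwards [eventually_gt_atTop 0] with y hy
    exact div_nonneg (Gamma_pos_of_pos hy).le (Gamma_pos_of_pos (by linarith)).le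
  filter_upwards [eventually_ge_atTop α] with y hy
  have hy0 : 0 < y := hα0.trans_le hy
  have hyα : 0 < y + α := by linarith
  have hG := mul_Gamma_le_Gamma_add_mul_rpow hα0 hα1 hy0
  rw [sub_eq_add_neg, rpow_add hyα, rpow_one] at hG
  have hΓ := Gamma_pos_of_pos hyα
  rw [div_le_iff₀ hΓ]
  refine le_of_mul_le_mul_left ?_ hy0
  calc y * Gamma y ≤ Gamma (y + α) * ((y + α) * (y + α) ^ (-α)) := hG
    _ ≤ Gamma (y + α) * ((2 * y) * (y + α) ^ (-α)) := by gcongr; linarith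
    _ = y * (2 * (y + α) ^ (-α) * Gamma (y + α)) := by ring

end Real

theorem intervalIntegrable_rpow_mul_sub_rpow {p q t : ℝ} (hp : 0 < p) (hq : 0 < q) (ht : 0 < t) :
    IntervalIntegrable (fun τ => τ ^ (p - 1) * (t - τ) ^ (q - 1)) volume 0 t := by
  have hmid : 0 < t / 2 := half_pos ht
  refine (IntervalIntegrable.trans (b := t / 2) ?_ ?_)
  · refine (intervalIntegrable_rpow' (by linarith)).mul_continuousOn
      (ContinuousOn.rpow_const (by fun_prop) fun x hx => Or.inl ?_)
    rw [uIcc_of_le hmid.le] at hx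
    linarith [hx.2]
  · have h := ((intervalIntegrable_rpow' (r := q - 1) (a := 0) (b := t / 2)
      (by linarith)).comp_sub_left t).symm
    rw [sub_zero, sub_half] at h
    refine h.continuousOn_mul (ContinuousOn.rpow_const (by fun_prop) fun x hx => Or.inl ?_)
    rw [uIcc_of_le (half_le_self ht.le)] at hx
    linarith [hx.1]

theorem integral_rpow_mul_sub_rpow {p q t : ℝ} (hp : 0 < p) (hq : 0 < q) (ht : 0 < t) :
    ∫ τ in (0 : ℝ)..t, τ ^ (p - 1) * (t - τ) ^ (q - 1)
      = Gamma p * Gamma q / Gamma (p + q) * t ^ (p + q - 1) := by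
  have hcast : ((∫ τ in (0 : ℝ)..t, τ ^ (p - 1) * (t - τ) ^ (q - 1) : ℝ) : ℂ)
      = ∫ τ in (0 : ℝ)..t, (τ : ℂ) ^ (p - 1 : ℂ) * ((t : ℂ) - τ) ^ (q - 1 : ℂ) := by
    rw [← intervalIntegral.integral_ofReal]
    refine intervalIntegral.integral_congr fun x hx => ?_
    rw [uIcc_of_le ht.le] at hx
    push_cast
    rw [Complex.ofReal_cpow hx.1, Complex.ofReal_cpow (sub_nonneg.2 hx.2)]
    push_cast
    ring
  have hΓ : Complex.Gamma (p + q) ≠ 0 := by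
    rw [← Complex.ofReal_add, Complex.Gamma_ofReal]
    exact_mod_cast (Gamma_pos_of_pos (add_pos hp hq)).ne'
  have hbeta : Complex.betaIntegral p q
      = Complex.Gamma p * Complex.Gamma q / Complex.Gamma (p + q) := by
    rw [eq_div_iff hΓ, mul_comm]
    exact (Complex.Gamma_mul_Gamma_eq_betaIntegral (by simpa using hp) (by simpa using hq)).symm
  apply Complex.ofReal_injective
  rw [hcast, Complex.betaIntegral_scaled _ _ ht, hbeta]
  rw [show ((p:ℂ) + q - 1) = ((p + q - 1 : ℝ) : ℂ) by push_cast; ring,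
    ← Complex.ofReal_cpow ht.le, ← Complex.ofReal_add]
  simp only [Complex.Gamma_ofReal]
  push_cast
  ring

theorem intervalIntegrable_mul_rpow_sub_one_mul_sub_rpow_neg {p α t : ℝ} (hp : 0 < p)
    (hα : α < 1) (ht : 0 < t) :
    IntervalIntegrable (fun τ => p * τ ^ (p - 1) * (t - τ) ^ (-α)) volume 0 t := by
  have h := (intervalIntegrable_rpow_mul_sub_rpow hp (sub_pos.2 hα) ht).const_mul p
  simpa only [sub_sub_cancel_left, ← mul_assoc] using h

theorem integral_mul_rpow_sub_one_mul_sub_rpow_neg {p α t : ℝ} (hp : 0 < p) (hα : α < 1)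
    (ht : 0 < t) :
    ∫ τ in (0 : ℝ)..t, p * τ ^ (p - 1) * (t - τ) ^ (-α)
      = Gamma (1 - α) * (Gamma (p + 1) / Gamma (p + 1 - α) * t ^ (p - α)) := by
  have h := integral_rpow_mul_sub_rpow hp (sub_pos.2 hα) ht
  rw [sub_sub_cancel_left, add_sub_assoc', show p + 1 - α - 1 = p - α by ring] at h
  simp_rw [mul_assoc, intervalIntegral.integral_const_mul, h, Gamma_add_one hp.ne']
  ring

theorem summable_mul_pow_mul_succ_of_tendsto_div {c : ℕ → ℝ} (hc : ∀ n, 0 < c n)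
    (h : Tendsto (fun n => c (n + 1) / c n) atTop (𝓝 0)) (r : ℝ) :
    Summable fun n : ℕ => c n * r ^ n * (n + 1) := by
  have hε : (0 : ℝ) < 1 / (4 * (|r| + 1)) := by positivity
  refine summable_of_ratio_norm_eventually_le one_half_lt_one ?_
  filter_upwards [h.eventually (ge_mem_nhds hε)] with n hn
  rw [div_le_iff₀ (hc n)] at hn
  have hr : |r| ≤ |r| + 1 := by linarith
  have hcn := hc n
  simp only [norm_mul, norm_pow, Real.norm_eq_abs, abs_of_pos (hc _), Nat.cast_add_one]
  rw [abs_of_pos (by positivity : (0 : ℝ) < n + 1 + 1),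
    abs_of_pos (by positivity : (0 : ℝ) < n + 1)]
  calc c (n + 1) * |r| ^ (n + 1) * (n + 1 + 1)
      ≤ 1 / (4 * (|r| + 1)) * c n * |r| ^ (n + 1) * (2 * (n + 1)) := by
        gcongr
        linarith
    _ = |r| / (|r| + 1) * (1 / 2 * (c n * |r| ^ n * (n + 1))) := by field_simp; ring
    _ ≤ 1 / 2 * (c n * |r| ^ n * (n + 1)) := by
        exact mul_le_of_le_one_left (by positivity) ((div_le_one (by positivity)).2 hr)

theorem summable_abs_mul_rpow_mul {a : ℕ → ℝ}
    (ha : ∀ R, Summable fun n : ℕ => |a n| * R ^ n * (n + 1)) (β : ℝ) {t : ℝ}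
    (ht : 0 ≤ t) : Summable fun n : ℕ => |a n| * t ^ (β * n) := by
  refine (ha (t ^ β)).of_nonneg_of_le (fun n => by positivity) fun n => ?_
  rw [rpow_mul ht, rpow_natCast]
  exact le_mul_of_one_le_right (by positivity) (by linarith [n.cast_nonneg (α := ℝ)])

theorem hasDerivAt_tsum_mul_rpow {a : ℕ → ℝ}
    (ha : ∀ R, Summable fun n : ℕ => |a n| * R ^ n * (n + 1)) {β τ : ℝ} (hβ : 0 ≤ β)
    (hτ : 0 < τ) :
    HasDerivAt (fun z => ∑' n : ℕ, a n * z ^ (β * n))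
      (∑' n : ℕ, a n * (β * n * τ ^ (β * n - 1))) τ := by
  set R := (τ + 1) ^ β
  have hτ_mem : τ ∈ Ioo (τ / 2) (τ + 1) := ⟨by linarith, by linarith⟩
  apply hasDerivAt_tsum_of_isPreconnected (g := fun n z => a n * z ^ (β * n))
    (g' := fun n z => a n * (β * n * z ^ (β * n - 1)))
    ((ha R).mul_right (β * (τ / 2)⁻¹)) isOpen_Ioo isPreconnected_Ioo _ _ hτ_mem
    ((summable_abs_mul_rpow_mul ha β hτ.le).of_norm_bounded fun n => by
      rw [norm_mul, Real.norm_eq_abs, Real.norm_of_nonneg (by positivity)]) hτ_mem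
  · intro n z hz
    exact (hasDerivAt_rpow_const (Or.inl (by linarith [hz.1]))).const_mul (a n)
  · intro n z hz
    have hz0 : 0 < z := by linarith [hz.1]
    have hpow : z ^ (β * n) ≤ R ^ n := by
      rw [← rpow_natCast, ← rpow_mul (by linarith)]
      exact rpow_le_rpow hz0.le hz.2.le (by positivity)
    rw [Real.norm_eq_abs, abs_mul,
      abs_of_nonneg (mul_nonneg (by positivity) (rpow_nonneg hz0.le _)), rpow_sub_one hz0.ne']
    calc |a n| * (β * n * (z ^ (β * n) / z))
        ≤ |a n| * (β * (n + 1) * (R ^ n / (τ / 2))) := by gcongr; exacts [by linarith, hz.1.le]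
      _ = |a n| * R ^ n * (n + 1) * (β * (τ / 2)⁻¹) := by ring

theorem integral_tsum_mul_rpow_mul_sub_rpow_neg {a : ℕ → ℝ} {β α t : ℝ} (hβ : 0 < β)
    (hα : α < 1) (ht : 0 < t)
    (hsum : Summable fun n : ℕ => |a (n + 1)| * (Gamma (β * (n + 1) + 1)
      / Gamma (β * (n + 1) + 1 - α) * t ^ (β * (n + 1) - α))) :
    ∫ τ in (0 : ℝ)..t, (∑' n : ℕ, a n * (β * n * τ ^ (β * n - 1))) * (t - τ) ^ (-α)
      = Gamma (1 - α) * ∑' n : ℕ, a (n + 1) * (Gamma (β * (n + 1) + 1)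
          / Gamma (β * (n + 1) + 1 - α) * t ^ (β * (n + 1) - α)) := by
  set M : ℕ → ℝ → ℝ := fun n τ =>
    β * (n + 1) * τ ^ (β * (n + 1) - 1) * (t - τ) ^ (-α)
  set F : ℕ → ℝ → ℝ := fun n τ => a n * (β * n * τ ^ (β * n - 1)) * (t - τ) ^ (-α)
  have hF_zero : F 0 = 0 := by ext; simp [F]
  have hF_succ (n : ℕ) : F (n + 1) = fun τ => a (n + 1) * M n τ := by
    ext τ; simp only [F, M]; push_cast; ring
  have hM_int (n : ℕ) : IntegrableOn (M n) (Ioc 0 t) :=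
    (intervalIntegrable_iff_integrableOn_Ioc_of_le ht.le).1
      (intervalIntegrable_mul_rpow_sub_one_mul_sub_rpow_neg (by positivity) hα ht)
  have hM_val (n : ℕ) : ∫ τ in Ioc 0 t, M n τ = Gamma (1 - α) * (Gamma (β * (n + 1) + 1)
      / Gamma (β * (n + 1) + 1 - α) * t ^ (β * (n + 1) - α)) := by
    rw [← integral_of_le ht.le]
    exact integral_mul_rpow_sub_one_mul_sub_rpow_neg (by positivity) hα ht
  have hM_nonneg (n : ℕ) : ∀ τ ∈ Ioc 0 t, 0 ≤ M n τ := fun τ hτ => by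
    have := sub_nonneg.2 hτ.2
    have := hτ.1.le
    positivity
  have hF_int (n : ℕ) : IntegrableOn (F n) (Ioc 0 t) := by
    cases n with
    | zero => rw [hF_zero]; exact integrableOn_zero
    | succ n => rw [hF_succ]; exact (hM_int n).const_mul _
  have hF_norm (n : ℕ) : ∫ τ in Ioc 0 t, ‖F (n + 1) τ‖ = Gamma (1 - α) * (|a (n + 1)|
      * (Gamma (β * (n + 1) + 1) / Gamma (β * (n + 1) + 1 - α) * t ^ (β * (n + 1) - α))) := by
    rw [hF_succ, setIntegral_congr_fun measurableSet_Ioc (g := fun τ => |a (n + 1)| * M n τ)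
      fun τ hτ => by simp [abs_of_nonneg (hM_nonneg n τ hτ)], MeasureTheory.integral_const_mul,
      hM_val]
    ring
  have hF_sum : Summable fun n => ∫ τ in Ioc 0 t, ‖F n τ‖ :=
    (summable_nat_add_iff 1).1 (by simpa only [hF_norm] using hsum.mul_left (Gamma (1 - α)))
  have hF_int_sum : Summable fun n => ∫ τ in Ioc 0 t, F n τ :=
    hF_sum.of_norm_bounded fun _ => MeasureTheory.norm_integral_le_integral_norm _
  rw [integral_of_le ht.le]
  simp_rw [← tsum_mul_right]
  rw [← integral_tsum_of_summable_integral_norm hF_int hF_sum, hF_int_sum.tsum_eq_zero_add,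
    hF_zero]
  simp only [Pi.zero_apply, integral_zero, zero_add, hF_succ, MeasureTheory.integral_const_mul,
    hM_val, mul_left_comm (a _), tsum_mul_left]

theorem ksCoeff_succ (a m l : ℝ) (n : ℕ) :
    ksCoeff a m l (n + 1) = ksCoeff a m l n *
      (Gamma (1 + a * (n * m + l)) / Gamma (1 + a * (n * m + l + 1))) :=
  Finset.prod_range_succ _ n

section StretchedCoefficients

/- For the parameters `(α, 1 + γ/α, γ/α)` the Gamma arguments in `ksCoeff` become
`1 + kβ + γ` and `1 + (k+1)β` with `β = α + γ`. -/

variable {α γ : ℝ}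

theorem ksCoeff_stretched_succ (hα : α ≠ 0) (n : ℕ) :
    ksCoeff α (1 + γ / α) (γ / α) (n + 1) = ksCoeff α (1 + γ / α) (γ / α) n *
      (Gamma ((α + γ) * n + 1 + γ) / Gamma ((α + γ) * n + 1 + γ + α)) := by
  rw [ksCoeff_succ]
  congr 3 <;> field_simp <;> ring

theorem ksCoeff_stretched_pos (hα : 0 < α) (hγ : 0 ≤ γ) (n : ℕ) :
    0 < ksCoeff α (1 + γ / α) (γ / α) n := by
  induction n with
  | zero => simp [ksCoeff]
  | succ n ih =>
    rw [ksCoeff_stretched_succ hα.ne']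
    exact mul_pos ih (div_pos (Gamma_pos_of_pos (by positivity))
      (Gamma_pos_of_pos (by positivity)))

theorem tendsto_ksCoeff_stretched_succ_div (hα0 : 0 < α) (hα1 : α < 1) (hγ : 0 ≤ γ) :
    Tendsto (fun n : ℕ => ksCoeff α (1 + γ / α) (γ / α) (n + 1) /
      ksCoeff α (1 + γ / α) (γ / α) n) atTop (𝓝 0) := by
  simp_rw [ksCoeff_stretched_succ hα0.ne',
    mul_div_cancel_left₀ _ (ksCoeff_stretched_pos hα0 hγ _).ne']
  refine (Real.tendsto_Gamma_div_Gamma_add_atTop hα0 hα1).comp ?_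
  exact tendsto_atTop_add_const_right _ _ (tendsto_atTop_add_const_right _ _
    (tendsto_natCast_atTop_atTop.const_mul_atTop (by positivity)))

theorem ksCoeff_stretched_succ_mul_Gamma_div (hα : 0 < α) (hγ : 0 ≤ γ) (n : ℕ) :
    ksCoeff α (1 + γ / α) (γ / α) (n + 1) *
        (Gamma ((α + γ) * (n + 1) + 1) / Gamma ((α + γ) * (n + 1) + 1 - α))
      = ksCoeff α (1 + γ / α) (γ / α) n := by
  have h₁ : (α + γ) * (n + 1) + 1 - α = (α + γ) * n + 1 + γ := by ring
  have h₂ : (α + γ) * n + 1 + γ + α = (α + γ) * (n + 1) + 1 := by ring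
  have := (Gamma_pos_of_pos (by positivity : 0 < (α + γ) * n + 1 + γ)).ne'
  have := (Gamma_pos_of_pos (by positivity : 0 < (α + γ) * (n + 1) + 1)).ne'
  rw [ksCoeff_stretched_succ hα.ne', h₁, h₂]
  field_simp

end StretchedCoefficients

noncomputable def stretchedCaputo (α γ : ℝ) (f : ℝ → ℝ) (t : ℝ) : ℝ :=
  t ^ (-γ) * ((1 / Gamma (1 - α)) * ∫ τ in (0 : ℝ)..t, deriv f τ * (t - τ) ^ (-α))

theorem stretchedCaputo_congr_of_eqOn_Ici {α γ t : ℝ} {f g : ℝ → ℝ} (h : EqOn f g (Ici 0))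
    (ht : 0 ≤ t) : stretchedCaputo α γ f t = stretchedCaputo α γ g t := by
  refine congrArg _ (congrArg _ (intervalIntegral.integral_congr_ae
    (Eventually.of_forall fun τ hτ => ?_)))
  rw [uIoc_of_le ht] at hτ
  rw [(h.eventuallyEq_of_mem (Ici_mem_nhds hτ.1)).deriv_eq]

theorem stretchedCaputo_tsum_mul_rpow {a : ℕ → ℝ} {α γ lam t : ℝ} (hβ : 0 < α + γ)
    (hα : α < 1) (ht : 0 < t) (ha : ∀ R, Summable fun n : ℕ => |a n| * R ^ n * (n + 1))
    (hrec : ∀ n : ℕ, a (n + 1) * (Gamma ((α + γ) * (n + 1) + 1)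
      / Gamma ((α + γ) * (n + 1) + 1 - α)) = -lam * a n) :
    stretchedCaputo α γ (fun z => ∑' n : ℕ, a n * z ^ ((α + γ) * n)) t
      = -lam * ∑' n : ℕ, a n * t ^ ((α + γ) * n) := by
  have hpow (n : ℕ) : t ^ ((α + γ) * (n + 1) - α) = t ^ γ * t ^ ((α + γ) * n) := by
    rw [← rpow_add ht]
    ring_nf
  have hsum : Summable fun n : ℕ => |a (n + 1)| * (Gamma ((α + γ) * (n + 1) + 1)
      / Gamma ((α + γ) * (n + 1) + 1 - α) * t ^ ((α + γ) * (n + 1) - α)) := by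
    refine ((summable_abs_mul_rpow_mul ha (α + γ) ht.le).mul_left (|lam| * t ^ γ)).congr
      fun n => ?_
    have hratio : 0 < Gamma ((α + γ) * (n + 1) + 1) / Gamma ((α + γ) * (n + 1) + 1 - α) :=
      div_pos (Gamma_pos_of_pos (by positivity)) (Gamma_pos_of_pos (by nlinarith))
    have habs := congrArg abs (hrec n)
    rw [abs_mul, abs_mul, abs_neg, abs_of_pos hratio] at habs
    rw [hpow]
    linear_combination (-(t ^ γ * t ^ ((α + γ) * n))) * habs
  rw [stretchedCaputo, intervalIntegral.integral_congr_ae (Eventually.of_forall fun τ hτ => by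
      rw [(hasDerivAt_tsum_mul_rpow ha hβ.le (uIoc_of_le ht.le ▸ hτ).1).deriv]),
    integral_tsum_mul_rpow_mul_sub_rpow_neg hβ hα ht hsum, one_div,
    inv_mul_cancel_left₀ (Gamma_pos_of_pos (sub_pos.2 hα)).ne']
  simp only [← tsum_mul_left]
  refine tsum_congr fun n => ?_
  have htγ := (rpow_pos_of_pos ht γ).ne'
  rw [hpow, ← mul_assoc (a (n + 1)), hrec, rpow_neg ht.le]
  field_simp

theorem kilbasSaigo_solves_stretched_relaxation_general (α γ lam : ℝ)
    (hα0 : 0 < α) (hα1 : α < 1) (hγ : 0 ≤ γ)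
    (f : ℝ → ℝ)
    (hf : ∀ t : ℝ, 0 ≤ t →
      f t = ∑' n : ℕ,
        ksCoeff α (1 + γ / α) (γ / α) n * (-lam) ^ n * t ^ ((α + γ) * n)) :
    f 0 = 1 ∧
      ∀ t : ℝ, 0 < t →
        t ^ (-γ) *
            ((1 / Real.Gamma (1 - α)) *
              ∫ τ in (0 : ℝ)..t, deriv f τ * (t - τ) ^ (-α))
          = -lam * f t := by
  set a : ℕ → ℝ := fun n => ksCoeff α (1 + γ / α) (γ / α) n * (-lam) ^ n
  have hc := ksCoeff_stretched_pos hα0 hγ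
  have ha (R : ℝ) : Summable fun n : ℕ => |a n| * R ^ n * (n + 1) := by
    simpa only [a, abs_mul, abs_pow, abs_neg, abs_of_pos (hc _), mul_assoc, ← mul_pow] using
      summable_mul_pow_mul_succ_of_tendsto_div hc
        (tendsto_ksCoeff_stretched_succ_div hα0 hα1 hγ) (|lam| * R)
  have hrec (n : ℕ) : a (n + 1) * (Gamma ((α + γ) * (n + 1) + 1)
      / Gamma ((α + γ) * (n + 1) + 1 - α)) = -lam * a n := by
    simp only [a]
    rw [← ksCoeff_stretched_succ_mul_Gamma_div hα0 hγ n, pow_succ]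
    ring
  refine ⟨?_, fun t ht => ?_⟩
  · rw [hf 0 le_rfl, tsum_eq_single 0 fun n hn => by rw [zero_rpow (by positivity), mul_zero]]
    simp [ksCoeff]
  change stretchedCaputo α γ f t = _
  rw [stretchedCaputo_congr_of_eqOn_Ici (fun z hz => hf z hz) ht.le,
    stretchedCaputo_tsum_mul_rpow (by positivity) hα1 ht ha hrec, hf t ht.le]

/-- The Kilbas–Saigo function `f(t) = E_{α,1+γ/α,γ/α}(-λ t^{α+γ})` solves the
stretched fractional relaxation equation
`t^{-γ} · (1/Γ(1-α)) ∫_0^t f'(τ)(t-τ)^{-α} dτ = -λ f(t)` with `f(0) = 1`. -/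
theorem kilbasSaigo_solves_stretched_relaxation (α γ lam : ℝ)
    (hα0 : 0 < α) (hα1 : α < 1) (hγ : 0 ≤ γ) (hαγ : α + γ ≤ 1) (hlam : 0 < lam)
    (f : ℝ → ℝ)
    (hf : ∀ t : ℝ, 0 ≤ t →
      f t = ∑' n : ℕ,
        ksCoeff α (1 + γ / α) (γ / α) n * (-lam) ^ n * t ^ ((α + γ) * n)) :
    f 0 = 1 ∧
      ∀ t : ℝ, 0 < t →
        t ^ (-γ) *
            ((1 / Real.Gamma (1 - α)) *
              ∫ τ in (0 : ℝ)..t, deriv f τ * (t - τ) ^ (-α))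
          = -lam * f t :=
  kilbasSaigo_solves_stretched_relaxation_general α γ lam hα0 hα1 hγ f hf
end

section
/- Let 0 < α < 1 and let f : [0,∞) → ℝ be continuously differentiable with |f'(t)| ≤ M e^{ct} for all t ≥ 0, for some constants M ≥ 0 and c ≥ 0. Then for every s > c, the Laplace transform of the Caputo derivative of f satisfies ∫_0^∞ e^{-st} (^C D_t^α f)(t) dt = s^α F(s) - s^{α-1} f(0), where F(s) = ∫_0^∞ e^{-st} f(t) dt and s^α denotes the real power. -/
/-!
The Caputo derivative is `(f' ⋆ k) / Γ(1 - α)` for the causal convolution `⋆` on `[0, ∞)` and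
the kernel `k(t) = t^{-α}`. Weighting both factors by `e^{-st}` turns the causal convolution
into an ordinary convolution on `ℝ` of two integrable functions, so the Laplace transform of
`f' ⋆ k` is the product of the transforms. The transform of `k` is `Γ(1 - α) s^{α-1}` (a Gamma
integral) and that of `f'` is `s F(s) - f(0)` (integration by parts; the boundary term at
infinity vanishes because `e^{-st} f` and its derivative are both integrable).
-/

open MeasureTheory Set Real Filter
open scoped Convolution

noncomputable def laplaceTransform (g : ℝ → ℝ) (s : ℝ) : ℝ :=
  ∫ t in Ioi 0, exp (-(s * t)) * g t

section

variable {g k : ℝ → ℝ} {s : ℝ}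

theorem laplaceTransform_const_mul (a : ℝ) :
    laplaceTransform (fun t => a * g t) s = a * laplaceTransform g s := by
  simp only [laplaceTransform, ← integral_const_mul, mul_left_comm]

theorem integrableOn_exp_neg_mul_of_abs_le_exp {M c : ℝ}
    (hg : AEStronglyMeasurable g (volume.restrict (Ioi 0)))
    (hbound : ∀ t, 0 ≤ t → |g t| ≤ M * exp (c * t)) (hs : c < s) :
    IntegrableOn (fun t => exp (-(s * t)) * g t) (Ioi 0) := by
  refine ((exp_neg_integrableOn_Ioi 0 (sub_pos.2 hs)).const_mul M).mono'
    ((continuous_exp.comp (continuous_const.mul continuous_id).neg).aestronglyMeasurable.mul hg) ?_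
  filter_upwards [ae_restrict_mem measurableSet_Ioi] with t ht
  calc ‖exp (-(s * t)) * g t‖ = exp (-(s * t)) * |g t| := by
        rw [norm_mul, norm_of_nonneg (exp_pos _).le, norm_eq_abs]
    _ ≤ exp (-(s * t)) * (M * exp (c * t)) := by gcongr; exact hbound t (le_of_lt ht)
    _ = M * exp (-(s - c) * t) := by rw [mul_left_comm, ← exp_add]; ring_nf

theorem laplaceTransform_convolution (hg : IntegrableOn (fun t => exp (-(s * t)) * g t) (Ioi 0))
    (hk : IntegrableOn (fun t => exp (-(s * t)) * k t) (Ioi 0)) :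
    laplaceTransform (fun t => ∫ τ in (0)..t, g τ * k (t - τ)) s
      = laplaceTransform g s * laplaceTransform k s := by
  set G := (Ioi 0).indicator fun t => exp (-(s * t)) * g t
  set K := (Ioi 0).indicator fun t => exp (-(s * t)) * k t
  have hGK : ∀ t τ, G τ * K (t - τ)
      = (Ioo 0 t).indicator (fun τ => exp (-(s * t)) * (g τ * k (t - τ))) τ := by
    intro t τ
    have hexp : exp (-(s * t)) = exp (-(s * τ)) * exp (-(s * (t - τ))) := by
      rw [← exp_add]; ring_nf
    by_cases h0 : 0 < τ <;> by_cases ht : τ < t <;>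
      simp [G, K, indicator, h0, ht, sub_pos]
    rw [hexp]; ring
  have hconv : (G ⋆[ContinuousLinearMap.mul ℝ ℝ, volume] K)
      = (Ioi 0).indicator fun t => exp (-(s * t)) * ∫ τ in (0)..t, g τ * k (t - τ) := by
    ext t
    simp only [convolution_mul, hGK, integral_indicator measurableSet_Ioo, integral_const_mul]
    by_cases ht : 0 < t
    · rw [indicator_of_mem (mem_Ioi.2 ht), intervalIntegral.integral_of_le ht.le,
        integral_Ioc_eq_integral_Ioo]
    · rw [indicator_of_notMem (mt mem_Ioi.1 ht), Ioo_eq_empty (by simpa using ht),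
        Measure.restrict_empty, integral_zero_measure, mul_zero]
  have key := integral_convolution (L := ContinuousLinearMap.mul ℝ ℝ) (μ := volume) (ν := volume)
    ((integrable_indicator_iff measurableSet_Ioi).2 hg)
    ((integrable_indicator_iff measurableSet_Ioi).2 hk)
  rw [hconv] at key
  simpa [G, K, laplaceTransform, integral_indicator measurableSet_Ioi] using key

theorem integrableOn_exp_neg_mul_rpow_neg {α : ℝ} (hα : α < 1) (hs : 0 < s) :
    IntegrableOn (fun t => exp (-(s * t)) * t ^ (-α)) (Ioi 0) := by
  simpa [mul_comm] using
    integrableOn_rpow_mul_exp_neg_mul_rpow (neg_lt_neg hα) zero_lt_one hs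

theorem laplaceTransform_rpow_neg {α : ℝ} (hα : α < 1) (hs : 0 < s) :
    laplaceTransform (fun t => t ^ (-α)) s = Gamma (1 - α) * s ^ (α - 1) := by
  have h := integral_rpow_mul_exp_neg_mul_Ioi (sub_pos.2 hα) hs
  rw [sub_sub_cancel_left, one_div, inv_rpow hs.le, ← Real.rpow_neg hs.le, neg_sub] at h
  simp only [laplaceTransform, mul_comm (exp _), h, mul_comm (Gamma _)]

theorem laplaceTransform_deriv {f f' : ℝ → ℝ}
    (hderiv : ∀ x ∈ Ici 0, HasDerivAt f (f' x) x)
    (hf : IntegrableOn (fun t => exp (-(s * t)) * f t) (Ioi 0))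
    (hf' : IntegrableOn (fun t => exp (-(s * t)) * f' t) (Ioi 0)) :
    laplaceTransform f' s = s * laplaceTransform f s - f 0 := by
  have hd : ∀ x ∈ Ici 0, HasDerivAt (fun t => exp (-(s * t)) * f t)
      (exp (-(s * x)) * f' x - s * (exp (-(s * x)) * f x)) x := by
    intro x hx
    have hexp : HasDerivAt (fun t => exp (-(s * t))) (exp (-(s * x)) * -s) x :=
      (((hasDerivAt_id x).const_mul s).neg.congr_deriv (by simp)).exp
    exact (hexp.mul (hderiv x hx)).congr_deriv (by ring)
  have hint := hf'.sub (hf.const_mul s)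
  have hlim := tendsto_zero_of_hasDerivAt_of_integrableOn_Ioi
    (fun x hx => hd x (mem_Ici.2 (le_of_lt hx))) hint hf
  have key := integral_Ioi_of_hasDerivAt_of_tendsto' hd hint hlim
  rw [integral_sub hf' (hf.const_mul s), integral_const_mul] at key
  simp only [mul_zero, neg_zero, exp_zero, one_mul, zero_sub] at key
  rw [laplaceTransform, laplaceTransform]
  linarith

end

theorem abs_le_exp_of_abs_deriv_le_exp {f : ℝ → ℝ} (hf : Differentiable ℝ f) {M c δ : ℝ}
    (hc : 0 ≤ c) (hδ : 0 < δ) (hbound : ∀ t, 0 ≤ t → |deriv f t| ≤ M * exp (c * t))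
    {t : ℝ} (ht : 0 ≤ t) : |f t| ≤ (|f 0| + M / δ) * exp ((c + δ) * t) := by
  have hM : 0 ≤ M := by simpa using (abs_nonneg _).trans (hbound 0 le_rfl)
  have hmvt : |f t - f 0| ≤ M * exp (c * t) * t := by
    simpa using norm_image_sub_le_of_norm_deriv_le_segment'
      (fun x _ => (hf x).hasDerivAt.hasDerivWithinAt)
      (fun x hx => (hbound x hx.1).trans (by gcongr; exact hx.2.le)) t ⟨ht, le_rfl⟩
  have hlin : t ≤ exp (δ * t) / δ := by
    rw [le_div_iff₀ hδ]; linarith [add_one_le_exp (δ * t)]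
  have hone : 1 ≤ exp ((c + δ) * t) := one_le_exp (by positivity)
  calc |f t| ≤ |f 0| + |f t - f 0| := by simpa using abs_add_le (f 0) (f t - f 0)
    _ ≤ |f 0| * exp ((c + δ) * t) + M * exp (c * t) * (exp (δ * t) / δ) := by
        gcongr
        · exact le_mul_of_one_le_right (abs_nonneg _) hone
        · exact hmvt.trans (by gcongr)
    _ = (|f 0| + M / δ) * exp ((c + δ) * t) := by
        rw [add_mul c, exp_add]; ring

theorem laplace_caputo_derivative_general (α : ℝ) (hα1 : α < 1)
    (f : ℝ → ℝ) (hf : ContDiff ℝ 1 f)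
    (M c : ℝ) (hc : 0 ≤ c)
    (hbound : ∀ t : ℝ, 0 ≤ t → |deriv f t| ≤ M * Real.exp (c * t)) :
    ∀ s : ℝ, c < s →
      (∫ t in Set.Ioi (0 : ℝ),
          Real.exp (-(s * t)) *
            ((1 / Real.Gamma (1 - α)) *
              ∫ τ in (0 : ℝ)..t, deriv f τ * (t - τ) ^ (-α)))
        = s ^ α * (∫ t in Set.Ioi (0 : ℝ), Real.exp (-(s * t)) * f t)
            - s ^ (α - 1) * f 0 := by
  intro s hs
  have hs0 : 0 < s := hc.trans_lt hs
  have hdiff : Differentiable ℝ f := hf.differentiable one_ne_zero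
  have hf' := integrableOn_exp_neg_mul_of_abs_le_exp
    (measurable_deriv f).aestronglyMeasurable hbound hs
  have hF := integrableOn_exp_neg_mul_of_abs_le_exp hdiff.continuous.aestronglyMeasurable
    (fun t ht => abs_le_exp_of_abs_deriv_le_exp hdiff hc (half_pos (sub_pos.2 hs)) hbound ht)
    (by linarith : c + (s - c) / 2 < s)
  have hΓ : Gamma (1 - α) ≠ 0 := (Gamma_pos_of_pos (sub_pos.2 hα1)).ne'
  change laplaceTransform (fun t => 1 / Gamma (1 - α) * _) s = s ^ α * laplaceTransform f s - _
  rw [laplaceTransform_const_mul,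
    laplaceTransform_convolution hf' (integrableOn_exp_neg_mul_rpow_neg hα1 hs0),
    laplaceTransform_deriv (fun x _ => (hdiff x).hasDerivAt) hF hf',
    laplaceTransform_rpow_neg hα1 hs0, rpow_sub_one hs0.ne']
  field_simp

/-- Laplace transform of the Caputo derivative: for `0 < α < 1` and a
continuously differentiable `f` with `|f'(t)| ≤ M e^{c t}` on `[0,∞)`,
for every `s > c` one has
`∫_0^∞ e^{-st} (^C D_t^α f)(t) dt = s^α F(s) - s^{α-1} f(0)`,
where `F(s) = ∫_0^∞ e^{-st} f(t) dt`. -/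
theorem laplace_caputo_derivative (α : ℝ) (hα0 : 0 < α) (hα1 : α < 1)
    (f : ℝ → ℝ) (hf : ContDiff ℝ 1 f)
    (M c : ℝ) (hM : 0 ≤ M) (hc : 0 ≤ c)
    (hbound : ∀ t : ℝ, 0 ≤ t → |deriv f t| ≤ M * Real.exp (c * t)) :
    ∀ s : ℝ, c < s →
      (∫ t in Set.Ioi (0 : ℝ),
          Real.exp (-(s * t)) *
            ((1 / Real.Gamma (1 - α)) *
              ∫ τ in (0 : ℝ)..t, deriv f τ * (t - τ) ^ (-α)))
        = s ^ α * (∫ t in Set.Ioi (0 : ℝ), Real.exp (-(s * t)) * f t)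
            - s ^ (α - 1) * f 0 :=
  laplace_caputo_derivative_general α hα1 f hf M c hc hbound
end
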